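/- For any finite set I of positive integers, the descent polynomial evaluated at 0 satisfies d(I;0) = (−1)^{#I}. -/
import Mathlib


/-- The descent set of a permutation of `Fin n`, with positions 1-indexed:
`i ∈ descSet n π` iff `1 ≤ i ≤ n-1` and `π_i > π_{i+1}` (1-indexed entries). -/
def descSet (n : ℕ) (π : Equiv.Perm (Fin n)) : Finset ℕ :=
  (Finset.range n).filter fun i =>
    ∃ h : 0 < i ∧ i < n, π ⟨i, h.2⟩ < π ⟨i - 1, by omega⟩

/-- `dA I n` is the number of permutations in `S_n` with descent set exactly `I`. -/
def dA (I : Finset ℕ) (n : ℕ) : ℕ :=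
  (Finset.univ.filter fun π : Equiv.Perm (Fin n) => descSet n π = I).card

lemma mem_descSet {n : ℕ} {π : Equiv.Perm (Fin n)} {i : ℕ} :
    i ∈ descSet n π ↔ ∃ h : 0 < i ∧ i < n, π ⟨i, h.2⟩ < π ⟨i - 1, by omega⟩ := by
  simp only [descSet, Finset.mem_filter, Finset.mem_range]
  constructor
  · rintro ⟨-, h⟩; exact h
  · rintro ⟨h, h2⟩; exact ⟨h.2, h, h2⟩

/-- if adjacent entries increase from position `m` onwards, entries increase. -/
lemma chain_lt {n m : ℕ} {α : Type*} [Preorder α] (f : Fin n → α)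
    (hadj : ∀ i : ℕ, (h : i + 1 < n) → m ≤ i → f ⟨i, by omega⟩ < f ⟨i + 1, h⟩) :
    ∀ a b : ℕ, m ≤ a → (hab : a < b) → (hb : b < n) → f ⟨a, by omega⟩ < f ⟨b, hb⟩ := by
  intro a b ha hab hb
  induction b with
  | zero => omega
  | succ b ih =>
    rcases Nat.lt_or_ge a b with h | h
    · exact lt_trans (ih h (by omega)) (hadj b hb (by omega))
    · have : a = b := by omega
      subst this
      exact hadj a hb ha

lemma adj_lt_of_not_descent {n : ℕ} (π : Equiv.Perm (Fin n)) (i : ℕ) (h : i + 1 < n)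
    (hnd : i + 1 ∉ descSet n π) : π ⟨i, by omega⟩ < π ⟨i + 1, h⟩ := by
  rw [mem_descSet] at hnd
  push_neg at hnd
  have h2 := hnd ⟨by omega, h⟩
  simp only [Nat.add_sub_cancel] at h2
  rcases lt_or_eq_of_le h2 with h3 | h3
  · exact h3
  · exfalso
    have := π.injective h3
    simp [Fin.ext_iff] at this

lemma eq_one_of_descSet_empty {n : ℕ} (π : Equiv.Perm (Fin n)) (h : descSet n π = ∅) :
    π = 1 := by
  have hsm : StrictMono (⇑π) := by
    intro a b hab
    have := chain_lt (⇑π) (m := 0)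
      (fun i hi _ => adj_lt_of_not_descent π i hi (by simp [h]))
      a b (Nat.zero_le _) hab b.2
    simpa using this
  have h1 : ∀ x, π x ∈ (Finset.univ : Finset (Fin n)) := fun x => Finset.mem_univ _
  have hc : (Finset.univ : Finset (Fin n)).card = n := by simp
  have e1 := Finset.orderEmbOfFin_unique hc h1 hsm
  have e2 := Finset.orderEmbOfFin_unique hc (f := fun x : Fin n => x)
    (fun x => Finset.mem_univ _) strictMono_id
  apply Equiv.ext
  intro x
  rw [show π x = (fun y => π y) x from rfl, e1, ← e2]
  rfl

lemma descSet_one (n : ℕ) : descSet n (1 : Equiv.Perm (Fin n)) = ∅ := by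
  rw [Finset.eq_empty_iff_forall_notMem]
  intro i hi
  rw [mem_descSet] at hi
  rcases hi with ⟨⟨h1, h2⟩, hlt⟩
  simp only [Equiv.Perm.one_apply, Fin.lt_def] at hlt
  omega

lemma dA_empty (n : ℕ) : dA ∅ n = 1 := by
  rw [dA]
  rw [Finset.card_eq_one]
  refine ⟨1, ?_⟩
  ext π
  simp only [Finset.mem_filter, Finset.mem_univ, true_and, Finset.mem_singleton]
  constructor
  · exact eq_one_of_descSet_empty π
  · rintro rfl; exact descSet_one n


lemma complCard {n m : ℕ} {A : Finset (Fin n)} (hA : A.card = m) : Aᶜ.card = n - m := by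
  rw [Finset.card_compl, hA, Fintype.card_fin]

noncomputable def buildFun {n m : ℕ} (A : Finset (Fin n)) (hA : A.card = m)
    (σ : Equiv.Perm (Fin m)) : Fin n → Fin n := fun i =>
  if h : (i : ℕ) < m then A.orderEmbOfFin hA (σ ⟨i, h⟩)
  else Aᶜ.orderEmbOfFin (complCard hA) ⟨(i : ℕ) - m, by have := i.2; omega⟩

lemma buildFun_injective {n m : ℕ} (A : Finset (Fin n)) (hA : A.card = m)
    (σ : Equiv.Perm (Fin m)) : Function.Injective (buildFun A hA σ) := by
  intro i j hij
  unfold buildFun at hij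
  by_cases hi : (i : ℕ) < m <;> by_cases hj : (j : ℕ) < m
  · rw [dif_pos hi, dif_pos hj] at hij
    have := σ.injective ((A.orderEmbOfFin hA).injective hij)
    rw [Fin.ext_iff] at this ⊢
    exact this
  · rw [dif_pos hi, dif_neg hj] at hij
    exfalso
    have h1 := Finset.orderEmbOfFin_mem A hA (σ ⟨i, hi⟩)
    rw [hij] at h1
    have h2 := Finset.orderEmbOfFin_mem Aᶜ (complCard hA) ⟨(j : ℕ) - m, by have := j.2; omega⟩
    rw [Finset.mem_compl] at h2
    exact h2 h1
  · rw [dif_neg hi, dif_pos hj] at hij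
    exfalso
    have h1 := Finset.orderEmbOfFin_mem A hA (σ ⟨j, hj⟩)
    rw [← hij] at h1
    have h2 := Finset.orderEmbOfFin_mem Aᶜ (complCard hA) ⟨(i : ℕ) - m, by have := i.2; omega⟩
    rw [Finset.mem_compl] at h2
    exact h2 h1
  · rw [dif_neg hi, dif_neg hj] at hij
    have := (Aᶜ.orderEmbOfFin (complCard hA)).injective hij
    rw [Fin.ext_iff] at this ⊢
    simp only at this
    omega

noncomputable def buildPerm {n m : ℕ} (A : Finset (Fin n)) (hA : A.card = m)
    (σ : Equiv.Perm (Fin m)) : Equiv.Perm (Fin n) :=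
  Equiv.ofBijective _ (Finite.injective_iff_bijective.mp (buildFun_injective A hA σ))

lemma buildPerm_apply_small {n m : ℕ} (A : Finset (Fin n)) (hA : A.card = m)
    (σ : Equiv.Perm (Fin m)) (i : ℕ) (hin : i < n) (h : i < m) :
    buildPerm A hA σ ⟨i, hin⟩ = A.orderEmbOfFin hA (σ ⟨i, h⟩) :=
  dif_pos h

lemma buildPerm_apply_large {n m : ℕ} (A : Finset (Fin n)) (hA : A.card = m)
    (σ : Equiv.Perm (Fin m)) (i : ℕ) (hin : i < n) (h : ¬ i < m) :
    buildPerm A hA σ ⟨i, hin⟩ = Aᶜ.orderEmbOfFin (complCard hA) ⟨i - m, by omega⟩ :=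
  dif_neg h

lemma buildPerm_descSet {n m : ℕ} (hmn : m ≤ n) (A : Finset (Fin n)) (hA : A.card = m)
    (σ : Equiv.Perm (Fin m)) (i : ℕ) (hi : i ≠ m) :
    i ∈ descSet n (buildPerm A hA σ) ↔ i ∈ descSet m σ := by
  rw [mem_descSet, mem_descSet]
  rcases Nat.lt_trichotomy i m with h | h | h
  · constructor
    · rintro ⟨⟨h1, h2⟩, hlt⟩
      refine ⟨⟨h1, h⟩, ?_⟩
      rw [buildPerm_apply_small A hA σ i h2 h,
        buildPerm_apply_small A hA σ (i - 1) (by omega) (by omega)] at hlt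
      exact (A.orderEmbOfFin hA).lt_iff_lt.mp hlt
    · rintro ⟨⟨h1, h2⟩, hlt⟩
      refine ⟨⟨h1, by omega⟩, ?_⟩
      rw [buildPerm_apply_small A hA σ i (by omega) h,
        buildPerm_apply_small A hA σ (i - 1) (by omega) (by omega)]
      exact (A.orderEmbOfFin hA).lt_iff_lt.mpr hlt
  · omega
  · constructor
    · rintro ⟨⟨h1, h2⟩, hlt⟩
      exfalso
      rw [buildPerm_apply_large A hA σ i h2 (by omega),
        buildPerm_apply_large A hA σ (i - 1) (by omega) (by omega)] at hlt
      have := (Aᶜ.orderEmbOfFin (complCard hA)).lt_iff_lt.mp hlt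
      rw [Fin.lt_def] at this
      simp only at this
      omega
    · rintro ⟨⟨h1, h2⟩, -⟩
      omega

lemma image_buildPerm {n m : ℕ} (hmn : m ≤ n) (A : Finset (Fin n)) (hA : A.card = m)
    (σ : Equiv.Perm (Fin m)) :
    Finset.image (fun i : Fin m => buildPerm A hA σ ⟨i, lt_of_lt_of_le i.2 hmn⟩)
      Finset.univ = A := by
  ext x
  simp only [Finset.mem_image, Finset.mem_univ, true_and]
  constructor
  · rintro ⟨i, rfl⟩
    rw [buildPerm_apply_small A hA σ i (lt_of_lt_of_le i.2 hmn) i.2]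
    exact Finset.orderEmbOfFin_mem A hA (σ ⟨i, i.2⟩)
  · intro hx
    have : x ∈ Set.range (A.orderEmbOfFin hA) := by
      rw [Finset.range_orderEmbOfFin]; exact hx
    obtain ⟨j, hj⟩ := this
    refine ⟨σ.symm j, ?_⟩
    rw [buildPerm_apply_small A hA σ (σ.symm j) (lt_of_lt_of_le (σ.symm j).2 hmn) (σ.symm j).2]
    have : (⟨(σ.symm j : ℕ), (σ.symm j).2⟩ : Fin m) = σ.symm j := rfl
    rw [this, Equiv.apply_symm_apply]
    exact hj

lemma build_injective {n m : ℕ} (hmn : m ≤ n) (A A' : Finset (Fin n))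
    (hA : A.card = m) (hA' : A'.card = m) (σ σ' : Equiv.Perm (Fin m))
    (h : buildPerm A hA σ = buildPerm A' hA' σ') : A = A' ∧ σ = σ' := by
  have hAA : A = A' := by
    rw [← image_buildPerm hmn A hA σ, ← image_buildPerm hmn A' hA' σ', h]
  subst hAA
  refine ⟨rfl, ?_⟩
  apply Equiv.ext
  intro i
  have h2 : buildPerm A hA σ ⟨i, lt_of_lt_of_le i.2 hmn⟩
      = buildPerm A hA' σ' ⟨i, lt_of_lt_of_le i.2 hmn⟩ := by rw [h]
  rw [buildPerm_apply_small A hA σ i (lt_of_lt_of_le i.2 hmn) i.2,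
    buildPerm_apply_small A hA' σ' i (lt_of_lt_of_le i.2 hmn) i.2] at h2
  have := (A.orderEmbOfFin hA).injective ((by exact h2 :
    A.orderEmbOfFin hA (σ ⟨i, i.2⟩) = A.orderEmbOfFin hA (σ' ⟨i, i.2⟩)))
  simpa using this

lemma build_surjective {n m : ℕ} (hmn : m ≤ n) (J : Finset ℕ) (hJ : ∀ j ∈ J, j < m)
    (π : Equiv.Perm (Fin n)) (h1 : J ⊆ descSet n π) (h2 : descSet n π ⊆ insert m J) :
    ∃ (A : Finset (Fin n)) (hA : A.card = m) (σ : Equiv.Perm (Fin m)),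
      descSet m σ = J ∧ buildPerm A hA σ = π := by
  set A : Finset (Fin n) :=
    Finset.image (fun i : Fin m => π ⟨i, lt_of_lt_of_le i.2 hmn⟩) Finset.univ with hAdef
  have hA : A.card = m := by
    rw [hAdef, Finset.card_image_of_injective, Finset.card_univ, Fintype.card_fin]
    intro a b hab
    have := π.injective hab
    rw [Fin.ext_iff] at this ⊢
    exact this
  have hmem : ∀ i : Fin m, π ⟨i, lt_of_lt_of_le i.2 hmn⟩ ∈ A := by
    intro i
    rw [hAdef]
    exact Finset.mem_image_of_mem _ (Finset.mem_univ i)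
  set σ0 : Fin m → Fin m :=
    fun i => (A.orderIsoOfFin hA).symm ⟨π ⟨i, lt_of_lt_of_le i.2 hmn⟩, hmem i⟩ with hσ0
  have hσ0inj : Function.Injective σ0 := by
    intro a b hab
    rw [hσ0] at hab
    have := (A.orderIsoOfFin hA).symm.injective hab
    have := Subtype.ext_iff.mp this
    have := π.injective this
    rw [Fin.ext_iff] at this ⊢
    exact this
  set σ : Equiv.Perm (Fin m) :=
    Equiv.ofBijective σ0 (Finite.injective_iff_bijective.mp hσ0inj) with hσdef
  have hhead : ∀ i : Fin m, A.orderEmbOfFin hA (σ i) = π ⟨i, lt_of_lt_of_le i.2 hmn⟩ := by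
    intro i
    have : σ i = σ0 i := rfl
    rw [this, hσ0, ← Finset.coe_orderIsoOfFin_apply, OrderIso.apply_symm_apply]
  -- tail is increasing
  have hadj : ∀ i : ℕ, (h : i + 1 < n) → m ≤ i → π ⟨i, by omega⟩ < π ⟨i + 1, h⟩ := by
    intro i h hi
    apply adj_lt_of_not_descent π i h
    intro hmem2
    have := h2 hmem2
    rw [Finset.mem_insert] at this
    rcases this with h3 | h3
    · omega
    · have := hJ _ h3; omega
  have htail : (fun k : Fin (n - m) => π ⟨m + k, by have := k.2; omega⟩)
      = Aᶜ.orderEmbOfFin (complCard hA) := by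
    apply Finset.orderEmbOfFin_unique
    · intro k
      rw [Finset.mem_compl]
      intro hk
      obtain ⟨j, -, hj⟩ := Finset.mem_image.mp hk
      have := π.injective hj
      rw [Fin.ext_iff] at this
      simp only at this
      have := j.2
      omega
    · intro a b hab
      rw [Fin.lt_def] at hab
      exact chain_lt (⇑π) hadj (m + a) (m + b) (by omega) (by omega) (by have := b.2; omega)
  have hbp : buildPerm A hA σ = π := by
    apply Equiv.ext
    rintro ⟨i, hin⟩
    by_cases h : i < m
    · rw [buildPerm_apply_small A hA σ i hin h]
      exact hhead ⟨i, h⟩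
    · rw [buildPerm_apply_large A hA σ i hin h]
      have := congrFun htail ⟨i - m, by omega⟩
      simp only at this
      rw [← this]
      congr 1
      rw [Fin.ext_iff]
      simp only
      omega
  refine ⟨A, hA, σ, ?_, hbp⟩
  ext i
  by_cases him : i = m
  · subst him
    constructor
    · intro hi
      rw [mem_descSet] at hi
      rcases hi with ⟨⟨-, hlt⟩, -⟩
      omega
    · intro hi
      exact absurd (hJ _ hi) (by omega)
  · rw [← buildPerm_descSet hmn A hA σ i him, hbp]
    constructor
    · intro hi
      have := h2 hi
      rw [Finset.mem_insert] at this
      tauto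
    · intro hi
      exact h1 hi

lemma key_count {J : Finset ℕ} {m n : ℕ} (hm : 0 < m) (hJ : ∀ j ∈ J, 0 < j ∧ j < m)
    (hmn : m ≤ n) : dA (insert m J) n + dA J n = n.choose m * dA J m := by
  classical
  have hmJ : m ∉ J := fun h => absurd (hJ m h).2 (lt_irrefl m)
  set S : Finset (Equiv.Perm (Fin n)) :=
    Finset.univ.filter (fun π => J ⊆ descSet n π ∧ descSet n π ⊆ insert m J) with hS
  have step2 : S.card = dA (insert m J) n + dA J n := by
    have hsplit : S = (Finset.univ.filter fun π : Equiv.Perm (Fin n) =>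
        descSet n π = insert m J) ∪ (Finset.univ.filter fun π => descSet n π = J) := by
      rw [← Finset.filter_or, hS]
      apply Finset.filter_congr
      intro π _
      constructor
      · rintro ⟨hs1, hs2⟩
        by_cases hmem : m ∈ descSet n π
        · left
          apply Finset.Subset.antisymm hs2
          rw [Finset.insert_subset_iff]
          exact ⟨hmem, hs1⟩
        · right
          apply Finset.Subset.antisymm _ hs1
          intro x hx
          rcases Finset.mem_insert.mp (hs2 hx) with rfl | h
          · exact absurd hx hmem
          · exact h
      · rintro (h | h) <;> rw [h]
        · exact ⟨Finset.subset_insert _ _ |>.trans (le_refl _), le_refl _⟩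
        · exact ⟨le_refl _, Finset.subset_insert _ _⟩
    rw [hsplit, Finset.card_union_of_disjoint, dA, dA]
    rw [Finset.disjoint_left]
    intro π hπ1 hπ2
    rw [Finset.mem_filter] at hπ1 hπ2
    apply hmJ
    rw [← hπ2.2, hπ1.2]
    exact Finset.mem_insert_self m J
  have step3 : ((Finset.powersetCard m (Finset.univ : Finset (Fin n))) ×ˢ
      (Finset.univ.filter fun σ : Equiv.Perm (Fin m) => descSet m σ = J)).card = S.card := by
    apply Finset.card_bij (fun a ha => buildPerm a.1
      (Finset.mem_powersetCard_univ.mp (Finset.mem_product.mp ha).1) a.2)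
    · intro a ha
      obtain ⟨ha1, ha2⟩ := Finset.mem_product.mp ha
      have hA := Finset.mem_powersetCard_univ.mp ha1
      have hσ : descSet m a.2 = J := (Finset.mem_filter.mp ha2).2
      rw [hS, Finset.mem_filter]
      refine ⟨Finset.mem_univ _, ?_, ?_⟩
      · intro j hj
        have hjm : j < m := (hJ j hj).2
        rw [buildPerm_descSet hmn a.1 hA a.2 j (by omega), hσ]
        exact hj
      · intro x hx
        by_cases hxm : x = m
        · subst hxm; exact Finset.mem_insert_self _ _
        · rw [buildPerm_descSet hmn a.1 hA a.2 x hxm, hσ] at hx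
          exact Finset.mem_insert_of_mem hx
    · intro a₁ ha₁ a₂ ha₂ heq
      obtain ⟨h1, h2⟩ := build_injective hmn a₁.1 a₂.1 _ _ a₁.2 a₂.2 heq
      exact Prod.ext h1 h2
    · intro π hπ
      rw [hS, Finset.mem_filter] at hπ
      obtain ⟨-, hπ1, hπ2⟩ := hπ
      obtain ⟨A, hA, σ, hσ, hbp⟩ :=
        build_surjective hmn J (fun j hj => (hJ j hj).2) π hπ1 hπ2
      refine ⟨(A, σ), ?_, ?_⟩
      · rw [Finset.mem_product]
        exact ⟨Finset.mem_powersetCard_univ.mpr hA,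
          Finset.mem_filter.mpr ⟨Finset.mem_univ _, hσ⟩⟩
      · exact hbp
  rw [← step2, ← step3, Finset.card_product, Finset.card_powersetCard, Finset.card_univ,
    Fintype.card_fin, dA]

lemma aux_main : ∀ (k : ℕ) (I : Finset ℕ), I.card = k → 0 ∉ I →
    ∀ (p : Polynomial ℚ) (N : ℕ), (∀ n : ℕ, N < n → p.eval (n : ℚ) = dA I n) →
    p.eval 0 = (-1) ^ I.card := by
  intro k
  induction k with
  | zero =>
    intro I hcard h0 p N hp
    rw [Finset.card_eq_zero] at hcard
    subst hcard
    have hroot : p - Polynomial.C 1 = 0 := by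
      apply Polynomial.eq_zero_of_infinite_isRoot
      apply Set.infinite_of_injective_forall_mem
        (f := fun t : ℕ => ((N + 1 + t : ℕ) : ℚ))
      · intro a b hab
        have : ((N + 1 + a : ℕ) : ℚ) = ((N + 1 + b : ℕ) : ℚ) := hab
        exact_mod_cast Nat.add_left_cancel (by exact_mod_cast this)
      · intro t
        simp only [Set.mem_setOf_eq, Polynomial.IsRoot, Polynomial.eval_sub,
          Polynomial.eval_C]
        rw [hp (N + 1 + t) (by omega), dA_empty]
        norm_num
    have hp1 : p = Polynomial.C 1 := by
      have := sub_eq_zero.mp hroot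
      exact this
    rw [hp1]
    simp
  | succ k ih =>
    intro I hcard h0 p N hp
    have hne : I.Nonempty := Finset.card_pos.mp (by omega)
    set m := I.max' hne with hm_def
    have hmI : m ∈ I := I.max'_mem hne
    have hm : 0 < m := Nat.pos_of_ne_zero (fun h => h0 (h ▸ hmI))
    set J := I.erase m with hJ_def
    have hJcard : J.card = k := by
      rw [hJ_def, Finset.card_erase_of_mem hmI, hcard]
      omega
    have h0J : 0 ∉ J := fun h => h0 (Finset.mem_of_mem_erase h)
    have hJ : ∀ j ∈ J, 0 < j ∧ j < m := by
      intro j hj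
      have hjI := Finset.mem_of_mem_erase hj
      have hjm : j ≠ m := Finset.ne_of_mem_erase hj
      have hle := I.le_max' j hjI
      exact ⟨Nat.pos_of_ne_zero (fun h => h0 (h ▸ hjI)), by omega⟩
    have hIJ : I = insert m J := by
      rw [hJ_def, Finset.insert_erase hmI]
    set q : Polynomial ℚ :=
      Polynomial.C ((dA J m : ℚ) / m.factorial) * descPochhammer ℚ m - p with hq_def
    have hq : ∀ n : ℕ, max N m < n → q.eval (n : ℚ) = dA J n := by
      intro n hn
      have hkey := key_count hm hJ (le_of_lt (lt_of_le_of_lt (le_max_right N m) hn))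
      rw [← hIJ] at hkey
      have hkeyQ : (dA I n : ℚ) + dA J n = (n.choose m : ℚ) * dA J m := by
        exact_mod_cast hkey
      rw [hq_def]
      rw [Polynomial.eval_sub, Polynomial.eval_mul, Polynomial.eval_C,
        descPochhammer_eval_eq_descFactorial,
        hp n (lt_of_le_of_lt (le_max_left N m) hn)]
      rw [Nat.descFactorial_eq_factorial_mul_choose]
      have hfac : (m.factorial : ℚ) ≠ 0 := by exact_mod_cast m.factorial_ne_zero
      push_cast
      have e : ((dA J m : ℚ) / (m.factorial : ℚ)) * ((m.factorial : ℚ) * (n.choose m : ℚ))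
          = (n.choose m : ℚ) * (dA J m : ℚ) := by
        field_simp
      rw [e]
      linarith [hkeyQ]
    have hq0 := ih J hJcard h0J q (max N m) hq
    rw [hq_def] at hq0
    rw [Polynomial.eval_sub, Polynomial.eval_mul, Polynomial.eval_C,
      descPochhammer_ne_zero_eval_zero (R := ℚ) (Nat.pos_iff_ne_zero.mp hm), mul_zero,
      zero_sub, hJcard] at hq0
    rw [hcard, pow_succ]
    have : p.eval 0 = -(-1 : ℚ) ^ k := by linarith [hq0]
    rw [this]
    ring

/-- Lemma 3.8: the descent polynomial satisfies `d(I;0) = (−1)^{#I}`. -/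
theorem stmt_9 (I : Finset ℕ) (h0 : 0 ∉ I) (p : Polynomial ℚ)
    (hp : ∀ n : ℕ, I.sup id < n → p.eval (n : ℚ) = dA I n) :
    p.eval 0 = (-1) ^ I.card := by
  exact aux_main I.card I rfl h0 p (I.sup id) hp
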